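/- arXiv:1803.10620 — 6 statements merged into one kernel-verified Lean document; each statement's English description precedes it below -/
import Mathlib

section
/- Two nonzero homogeneous derivations ∂_{ρ,e} and ∂_{ρ',e'} commute if and only if either (1) ρ and ρ' are collinear and ⟨ρ,e⟩ = ⟨ρ,e'⟩, or (2) ρ and ρ' are non-collinear and ⟨ρ',e⟩ = ⟨ρ,e'⟩ = 0. -/
/-!
On monomials, `∂_{ρ,e} ∂_{ρ',e'} χ^m = ρ'(m) ρ(m + e') χ^{m+e+e'}`, so the two derivations commute
iff `ρ'(m) ρ(e') = ρ(m) ρ'(e)` for all `m`, i.e. iff `ρ̂ = ρ(e') ρ' - ρ'(e) ρ` vanishes (this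
needs characteristic zero). The rest is arithmetic of covectors. If `ρ'(e) ≠ 0`, then `ρ̂ = 0` is
itself a collinearity relation, and evaluating it at `e` gives `ρ(e) = ρ(e')`. If `ρ'(e) = 0`, then
`ρ(e') ρ' = 0` forces `ρ(e') = 0`, and under collinearity `ker ρ' ⊆ ker ρ` gives `ρ(e) = 0` as well.
-/

/-- The homogeneous derivation `∂_{ρ,e}` of the (semi)group algebra, defined on the
monomial basis by `∂_{ρ,e}(χ^m) = ⟨ρ,m⟩ χ^{m+e}`. -/
noncomputable def homDer (K : Type*) [Field K] {M : Type*} [AddCommGroup M]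
    (ρ : M →+ ℤ) (e : M) :
    AddMonoidAlgebra K M →ₗ[K] AddMonoidAlgebra K M :=
  (Finsupp.lsum K fun m =>
    LinearMap.toSpanSingleton K (AddMonoidAlgebra K M)
      ((ρ m : ℤ) • AddMonoidAlgebra.single (m + e) (1 : K))) ∘ₗ
    (AddMonoidAlgebra.coeffLinearEquiv K).toLinearMap

/-- Collinearity of two lattice covectors. -/
def CollinearCovectors {M : Type*} [AddCommGroup M] (ρ ρ' : M →+ ℤ) : Prop :=
  ∃ a b : ℤ, (a ≠ 0 ∨ b ≠ 0) ∧ a • ρ = b • ρ'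

open AddMonoidAlgebra

section HomDer

variable {K : Type*} [Field K] {M : Type*} [AddCommGroup M]

theorem homDer_single (ρ : M →+ ℤ) (e m : M) (c : K) :
    homDer K ρ e (single m c) = single (m + e) ((ρ m : K) * c) := by
  simp only [homDer, LinearMap.comp_apply, LinearEquiv.coe_coe, coeffLinearEquiv_apply,
    coeff_single, Finsupp.lsum_single, LinearMap.toSpanSingleton_apply]
  rw [← Int.cast_smul_eq_zsmul K, smul_comm, smul_single, smul_single, smul_eq_mul, smul_eq_mul,
    mul_one, mul_comm]

theorem homDer_zero (e : M) : homDer K 0 e = 0 :=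
  lhom_ext' fun m => LinearMap.ext fun c => by simp [homDer_single]

theorem homDer_homDer_single (ρ ρ' : M →+ ℤ) (e e' m : M) (c : K) :
    homDer K ρ e (homDer K ρ' e' (single m c)) =
      single (m + e' + e) (((ρ' m * ρ (m + e') : ℤ) : K) * c) := by
  rw [homDer_single, homDer_single, Int.cast_mul, mul_assoc, mul_left_comm]

theorem homDer_comp_comm_iff [CharZero K] (ρ ρ' : M →+ ℤ) (e e' : M) :
    homDer K ρ e ∘ₗ homDer K ρ' e' = homDer K ρ' e' ∘ₗ homDer K ρ e ↔
      ρ e' • ρ' = ρ' e • ρ := by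
  calc homDer K ρ e ∘ₗ homDer K ρ' e' = homDer K ρ' e' ∘ₗ homDer K ρ e
      ↔ ∀ m (c : K), homDer K ρ e (homDer K ρ' e' (single m c)) =
          homDer K ρ' e' (homDer K ρ e (single m c)) :=
        ⟨fun H m c => LinearMap.congr_fun H _,
          fun H => lhom_ext' fun m => LinearMap.ext fun c => H m c⟩
    _ ↔ ∀ m, ρ' m * ρ (m + e') = ρ m * ρ' (m + e) := by
        simp only [homDer_homDer_single, add_right_comm _ e' e, single_right_inj]
        refine forall_congr' fun m => ⟨fun H => ?_, fun H c => by rw [H]⟩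
        exact_mod_cast mul_right_cancel₀ one_ne_zero (H 1)
    _ ↔ ρ e' • ρ' = ρ' e • ρ := by
        rw [AddMonoidHom.ext_iff]
        refine forall_congr' fun m => ?_
        simp only [map_add, AddMonoidHom.smul_apply, smul_eq_mul]
        constructor <;> intro H <;> linarith

end HomDer

section Covectors

variable {M : Type*} [AddCommGroup M] {ρ ρ' : M →+ ℤ}

theorem eq_zero_of_zsmul_covector_eq_zero {b : ℤ} (hρ : ρ ≠ 0) (h : b • ρ = 0) : b = 0 := by
  by_contra hb
  refine hρ (AddMonoidHom.ext fun x => ?_)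
  simpa [hb] using DFunLike.congr_fun h x

theorem CollinearCovectors.exists_smul_eq_smul (hρ' : ρ' ≠ 0) (h : CollinearCovectors ρ ρ') :
    ∃ a b : ℤ, a ≠ 0 ∧ a • ρ = b • ρ' := by
  obtain ⟨a, b, hab, hcol⟩ := h
  refine ⟨a, b, fun ha => ?_, hcol⟩
  have hb : b = 0 := eq_zero_of_zsmul_covector_eq_zero hρ' (by rw [← hcol, ha, zero_smul])
  exact hab.elim (· ha) (· hb)

theorem CollinearCovectors.apply_eq_zero (hρ' : ρ' ≠ 0) (h : CollinearCovectors ρ ρ') {x : M}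
    (hx : ρ' x = 0) : ρ x = 0 := by
  obtain ⟨a, b, ha, hcol⟩ := h.exists_smul_eq_smul hρ'
  have := DFunLike.congr_fun hcol x
  simp only [AddMonoidHom.smul_apply, smul_eq_mul, hx, mul_zero, mul_eq_zero] at this
  exact this.resolve_left ha

theorem CollinearCovectors.smul_eq_smul (hρ' : ρ' ≠ 0) (h : CollinearCovectors ρ ρ') {e e' : M}
    (he : ρ e = ρ e') : ρ e' • ρ' = ρ' e • ρ := by
  obtain ⟨a, b, ha, hcol⟩ := h.exists_smul_eq_smul hρ'
  ext x
  have hx := DFunLike.congr_fun hcol x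
  have hae := DFunLike.congr_fun hcol e
  simp only [AddMonoidHom.smul_apply, smul_eq_mul] at hx hae ⊢
  apply mul_left_cancel₀ ha
  linear_combination ρ' x * hae - ρ' e * hx - a * ρ' x * he

theorem smul_eq_smul_iff_collinearCovectors (hρ' : ρ' ≠ 0) (e e' : M) :
    ρ e' • ρ' = ρ' e • ρ ↔
      (CollinearCovectors ρ ρ' ∧ ρ e = ρ e') ∨
      (¬ CollinearCovectors ρ ρ' ∧ ρ' e = 0 ∧ ρ e' = 0) := by
  constructor
  · intro h
    by_cases he : ρ' e = 0
    · have he' : ρ e' = 0 :=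
        eq_zero_of_zsmul_covector_eq_zero hρ' (by rw [h, he, zero_smul])
      by_cases hcol : CollinearCovectors ρ ρ'
      · exact Or.inl ⟨hcol, by rw [hcol.apply_eq_zero hρ' he, he']⟩
      · exact Or.inr ⟨hcol, he, he'⟩
    · refine Or.inl ⟨⟨ρ' e, ρ e', Or.inl he, h.symm⟩, ?_⟩
      have := DFunLike.congr_fun h e
      simp only [AddMonoidHom.smul_apply, smul_eq_mul, mul_comm (ρ e')] at this
      exact (mul_left_cancel₀ he this).symm
  · rintro (⟨hcol, he⟩ | ⟨-, he, he'⟩)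
    · exact hcol.smul_eq_smul hρ' he
    · rw [he, he', zero_smul, zero_smul]

end Covectors

theorem stmt3_general {K : Type*} [Field K] [CharZero K] {M : Type*} [AddCommGroup M]
    (ρ ρ' : M →+ ℤ) (e e' : M)
    (h' : homDer K ρ' e' ≠ 0) :
    homDer K ρ e ∘ₗ homDer K ρ' e' = homDer K ρ' e' ∘ₗ homDer K ρ e ↔
      (CollinearCovectors ρ ρ' ∧ ρ e = ρ e') ∨
      (¬ CollinearCovectors ρ ρ' ∧ ρ' e = 0 ∧ ρ e' = 0) := by
  have hρ' : ρ' ≠ 0 := by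
    rintro rfl
    exact h' (homDer_zero e')
  rw [homDer_comp_comm_iff, smul_eq_smul_iff_collinearCovectors hρ']

/-- two nonzero homogeneous derivations `∂_{ρ,e}`, `∂_{ρ',e'}` commute iff
either (1) `ρ, ρ'` are collinear and `⟨ρ,e⟩ = ⟨ρ,e'⟩`, or (2) `ρ, ρ'` are non-collinear
and `⟨ρ',e⟩ = ⟨ρ,e'⟩ = 0`. -/
theorem stmt3 {K : Type*} [Field K] [CharZero K] {M : Type*} [AddCommGroup M]
    (ρ ρ' : M →+ ℤ) (e e' : M)
    (h : homDer K ρ e ≠ 0) (h' : homDer K ρ' e' ≠ 0) :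
    homDer K ρ e ∘ₗ homDer K ρ' e' = homDer K ρ' e' ∘ₗ homDer K ρ e ↔
      (CollinearCovectors ρ ρ' ∧ ρ e = ρ e') ∨
      (¬ CollinearCovectors ρ ρ' ∧ ρ' e = 0 ∧ ρ e' = 0) :=
  stmt3_general ρ ρ' e e' h'
end

section
/- If U is a locally nilpotent derivation of a finitely generated commutative K-algebra A, then the adjoint operator ad_U on Der(A) is locally nilpotent: for every derivation V of A there exists N such that ad_U^m(V) = 0 for all m > N. -/
/-!
Expanding `ad_u^m v` with `ad_u w = u w - w u` writes it as an integer combination of the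
products `u^i v u^j` with `i + j = m`. For a fixed `a`, `u^j a = 0` once `j` is large, and each of
the finitely many remaining `v (u^j a)` is killed by a bounded power of `u`; so `ad_U^m V`
vanishes at `a` for all large `m`. A derivation is determined by its values on generators,
and there are finitely many of them.
-/

section Ring

variable {E : Type*} [Ring E]

theorem mul_sub_mul_mem_span_pow_mul_mul_pow {u v w : E} {m : ℕ}
    (hw : w ∈ Submodule.span ℤ {w | ∃ i j, i + j = m ∧ u ^ i * v * u ^ j = w}) :
    u * w - w * u ∈
      Submodule.span ℤ {w | ∃ i j, i + j = m + 1 ∧ u ^ i * v * u ^ j = w} := by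
  induction hw using Submodule.span_induction with
  | mem w hw =>
    obtain ⟨i, j, hij, rfl⟩ := hw
    have hleft : u ^ (i + 1) * v * u ^ j = u * (u ^ i * v * u ^ j) := by
      rw [pow_succ', mul_assoc, mul_assoc, mul_assoc]
    have hright : u ^ i * v * u ^ (j + 1) = u ^ i * v * u ^ j * u := by
      rw [pow_succ, ← mul_assoc]
    exact Submodule.sub_mem _
      (Submodule.subset_span ⟨i + 1, j, by omega, hleft⟩)
      (Submodule.subset_span ⟨i, j + 1, by omega, hright⟩)
  | zero => simp
  | add x y _ _ hx hy =>
    rw [mul_add, add_mul, add_sub_add_comm]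
    exact Submodule.add_mem _ hx hy
  | smul n x _ hx =>
    rw [mul_smul_comm, smul_mul_assoc, ← smul_sub]
    exact Submodule.smul_mem _ n hx

theorem iterate_commutator_mem_span_pow_mul_mul_pow (u v : E) (m : ℕ) :
    (fun w => u * w - w * u)^[m] v ∈
      Submodule.span ℤ {w | ∃ i j, i + j = m ∧ u ^ i * v * u ^ j = w} := by
  induction m with
  | zero => exact Submodule.subset_span ⟨0, 0, rfl, by simp⟩
  | succ m ih =>
    rw [Function.iterate_succ_apply']
    exact mul_sub_mul_mem_span_pow_mul_mul_pow ih

end Ring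

namespace Module.End

variable {R M : Type*} [Semiring R]

theorem iterate_commutator_apply_eq_zero [AddCommGroup M] [Module R M]
    {u v : Module.End R M} {m : ℕ} {x : M}
    (h : ∀ i j, i + j = m → (u ^ i) (v ((u ^ j) x)) = 0) :
    ((fun w => u * w - w * u)^[m] v) x = 0 := by
  refine Submodule.span_induction (p := fun w _ => w x = 0) ?_ rfl ?_ ?_
    (iterate_commutator_mem_span_pow_mul_mul_pow u v m)
  · rintro _ ⟨i, j, hij, rfl⟩
    exact h i j hij
  · intro w w' _ _ hw hw'
    rw [LinearMap.add_apply, hw, hw', add_zero]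
  · intro n w _ hw
    rw [LinearMap.smul_apply, hw, smul_zero]

theorem exists_pow_apply_pow_apply_eq_zero [AddCommMonoid M] [Module R M]
    {u : Module.End R M} (hu : ∀ x, ∃ n, (u ^ n) x = 0) (v : Module.End R M) (x : M) :
    ∃ N, ∀ i j, N < i + j → (u ^ i) (v ((u ^ j) x)) = 0 := by
  obtain ⟨n, hn⟩ := hu x
  choose e he using fun j => hu (v ((u ^ j) x))
  refine ⟨n + (Finset.range n).sup e, fun i j hij => ?_⟩
  by_cases hjn : n ≤ j
  · rw [pow_map_zero_of_le hjn hn, map_zero, map_zero]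
  · have hej : e j ≤ (Finset.range n).sup e := Finset.le_sup (Finset.mem_range.mpr (by omega))
    exact pow_map_zero_of_le (by omega) (he j)

end Module.End

theorem Derivation.coe_iterate_lie {R A : Type*} [CommRing R] [CommRing A] [Algebra R A]
    (U V : Derivation R A A) (m : ℕ) :
    (((fun W => ⁅U, W⁆)^[m] V : Derivation R A A) : Module.End R A) =
      (fun w => (U : Module.End R A) * w - w * U)^[m] (V : Module.End R A) :=
  (Function.Semiconj.iterate_right (f := ((↑) : Derivation R A A → Module.End R A))
    (fun _ => commutator_coe_linear_map.trans (LieRing.of_associative_ring_bracket _ _)) m).eq V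

theorem stmt4_general {K A : Type*} [Field K] [CommRing A] [Algebra K A]
    (hfg : Algebra.FiniteType K A)
    (U : Derivation K A A)
    (hU : ∀ a : A, ∃ n : ℕ, ((U : A →ₗ[K] A) ^ n) a = 0) :
    ∀ V : Derivation K A A, ∃ N : ℕ, ∀ m : ℕ, N < m →
      (fun W : Derivation K A A => ⁅U, W⁆)^[m] V = 0 := by
  intro V
  choose N hN using Module.End.exists_pow_apply_pow_apply_eq_zero hU (V : Module.End K A)
  obtain ⟨s, hs⟩ := hfg
  refine ⟨s.sup N, fun m hm => Derivation.ext_of_adjoin_eq_top _ hs fun a ha => ?_⟩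
  have hNa : N a < m := (Finset.le_sup (f := N) ha).trans_lt hm
  show (((fun W => ⁅U, W⁆)^[m] V : Derivation K A A) : Module.End K A) a = 0
  rw [Derivation.coe_iterate_lie]
  exact Module.End.iterate_commutator_apply_eq_zero fun i j hij => hN a i j (hij ▸ hNa)

/-- if `U` is a locally nilpotent derivation of a finitely generated
commutative `K`-algebra `A`, then `ad_U` is locally nilpotent on `Der(A)`:
for every derivation `V` there is `N` with `ad_U^m(V) = 0` for all `m > N`. -/
theorem stmt4 {K A : Type*} [Field K] [CharZero K] [CommRing A] [Algebra K A]
    (hfg : Algebra.FiniteType K A)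
    (U : Derivation K A A)
    (hU : ∀ a : A, ∃ n : ℕ, ((U : A →ₗ[K] A) ^ n) a = 0) :
    ∀ V : Derivation K A A, ∃ N : ℕ, ∀ m : ℕ, N < m →
      (fun W : Derivation K A A => ⁅U, W⁆)^[m] V = 0 :=
  stmt4_general hfg U hU
end

section
/- If ∂ is a locally nilpotent derivation of the M-graded semigroup algebra A with homogeneous decomposition ∂ = Σ_e ∂_e, then for any face τ of the Newton polytope N(∂) the truncated derivation ∂_τ = Σ_{e ∈ τ ∩ M} ∂_e is again locally nilpotent. In particular, every vertex component ∂_e is locally nilpotent. -/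
/-- `x` belongs to the semigroup algebra `A` of the cone `σ^∨ ∩ M = {m | ⟨ρ_i,m⟩ ≥ 0}`. -/
def InConeAlg {K : Type*} [Field K] {M : Type*} [AddCommGroup M] {k : ℕ}
    (ρs : Fin k → (M →+ ℤ)) (x : AddMonoidAlgebra K M) : Prop :=
  ∀ m ∈ x.coeff.support, ∀ i, 0 ≤ ρs i m

/-! The functional `l` grades `K[M]`, and `∂_e` raises the `l`-degree by `l e ≤ L := max_E l`.
Hence, for `x` homogeneous of degree `d`, the degree `d + N L` component of `∂^N x` is exactly
`∂_τ^N x`, so `∂^N x = 0` forces `∂_τ^N x = 0`. The cone algebra is spanned by its homogeneous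
elements (the grading only filters supports), and the vectors killed by some power of `∂_τ`
form a submodule. -/

open AddMonoidAlgebra DirectSum

lemma Module.End.mem_maxGenEigenspace_zero_iff {R V : Type*} [CommRing R] [AddCommGroup V]
    [Module R V] (f : Module.End R V) (x : V) :
    x ∈ f.maxGenEigenspace 0 ↔ ∃ N : ℕ, f^[N] x = 0 := by
  simp [Module.End.mem_maxGenEigenspace, Module.End.pow_apply]

lemma Finset.exists_filter_forall_le_eq_filter_eq {α : Type*} (s : Finset α) (f : α → ℤ) :
    ∃ b, (∀ a ∈ s, f a ≤ b) ∧
      s.filter (fun a => ∀ a' ∈ s, f a' ≤ f a) = s.filter (fun a => f a = b) := by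
  rcases s.eq_empty_or_nonempty with rfl | hs
  · exact ⟨0, by simp⟩
  refine ⟨s.sup' hs f, fun a ha => s.le_sup' f ha, Finset.filter_congr fun a ha => ?_⟩
  exact ⟨fun h => le_antisymm (s.le_sup' f ha) (s.sup'_le hs f h),
    fun h a' ha' => h ▸ s.le_sup' f ha'⟩

namespace AddMonoidAlgebra

variable {K : Type*} [Field K] {M : Type*} [AddCommGroup M]

lemma homDer_single (ρ : M →+ ℤ) (e m : M) (r : K) :
    homDer K ρ e (single m r) = single (m + e) (r * ρ m) := by
  simp [homDer]

variable (l : M →+ ℤ)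

lemma proj_gradeBy_single (d : ℤ) (m : M) (r : K) :
    GradedAlgebra.proj (gradeBy K l) d (single m r) = if l m = d then single m r else 0 := by
  rw [GradedAlgebra.proj_apply, GradesBy.decompose_single]
  split_ifs with h
  · subst h; simp
  · rw [DirectSum.of_eq_of_ne _ _ _ (Ne.symm h)]; rfl

lemma coeff_proj_gradeBy (d : ℤ) (x : AddMonoidAlgebra K M) (m : M) :
    (GradedAlgebra.proj (gradeBy K l) d x).coeff m = if l m = d then x.coeff m else 0 := by
  induction x using AddMonoidAlgebra.induction_linear with
  | zero => simp
  | add x y hx hy => simp only [map_add, coeff_add, Finsupp.add_apply, hx, hy]; split_ifs <;> simp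
  | single m' r =>
    rw [proj_gradeBy_single]
    rcases eq_or_ne m' m with rfl | hm
    · split_ifs <;> simp
    · split_ifs <;> simp [hm]

lemma support_proj_gradeBy_subset (d : ℤ) (x : AddMonoidAlgebra K M) :
    (GradedAlgebra.proj (gradeBy K l) d x).coeff.support ⊆ x.coeff.support := fun m hm => by
  rw [Finsupp.mem_support_iff, coeff_proj_gradeBy] at hm
  exact Finsupp.mem_support_iff.2 fun h => hm (by simp [h])

lemma proj_gradeBy_homDer (ρ : M →+ ℤ) (e : M) (d : ℤ) (x : AddMonoidAlgebra K M) :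
    GradedAlgebra.proj (gradeBy K l) d (homDer K ρ e x) =
      homDer K ρ e (GradedAlgebra.proj (gradeBy K l) (d - l e) x) := by
  suffices GradedAlgebra.proj (gradeBy K l) d ∘ₗ homDer K ρ e =
      homDer K ρ e ∘ₗ GradedAlgebra.proj (gradeBy K l) (d - l e) from LinearMap.congr_fun this x
  refine lhom_ext' fun m => LinearMap.ext fun r => ?_
  simp only [LinearMap.comp_apply, lsingle_apply, homDer_single, proj_gradeBy_single, map_add,
    eq_sub_iff_add_eq]
  split_ifs <;> simp only [homDer_single, map_zero]

variable (c : M → (M →+ ℤ))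

lemma proj_gradeBy_sum_homDer (s : Finset M) (d : ℤ) (x : AddMonoidAlgebra K M) :
    GradedAlgebra.proj (gradeBy K l) d ((∑ e ∈ s, homDer K (c e) e) x) =
      ∑ e ∈ s, homDer K (c e) e (GradedAlgebra.proj (gradeBy K l) (d - l e) x) := by
  simp only [LinearMap.sum_apply, map_sum, proj_gradeBy_homDer]

variable {l c} {E : Finset M} {L d : ℤ} {x : AddMonoidAlgebra K M}

lemma proj_gradeBy_iterate_sum_homDer_eq_zero (hE : ∀ e ∈ E, l e ≤ L)
    (hx : ∀ j, d < j → GradedAlgebra.proj (gradeBy K l) j x = 0) (N : ℕ) (j : ℤ)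
    (hj : d + N * L < j) :
    GradedAlgebra.proj (gradeBy K l) j ((⇑(∑ e ∈ E, homDer K (c e) e))^[N] x) = 0 := by
  induction N generalizing j with
  | zero => simpa using hx j (by simpa using hj)
  | succ N ih =>
    rw [Function.iterate_succ_apply', proj_gradeBy_sum_homDer]
    refine Finset.sum_eq_zero fun e he => ?_
    rw [ih _ (by push_cast at hj; linarith [hE e he]), map_zero]

lemma proj_gradeBy_iterate_sum_homDer_top (hE : ∀ e ∈ E, l e ≤ L)
    (hx : ∀ j, d < j → GradedAlgebra.proj (gradeBy K l) j x = 0) (N : ℕ) :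
    GradedAlgebra.proj (gradeBy K l) (d + N * L) ((⇑(∑ e ∈ E, homDer K (c e) e))^[N] x) =
      (⇑(∑ e ∈ E.filter (fun e => l e = L), homDer K (c e) e))^[N]
        (GradedAlgebra.proj (gradeBy K l) d x) := by
  induction N with
  | zero => simp
  | succ N ih =>
    rw [Function.iterate_succ_apply', Function.iterate_succ_apply', proj_gradeBy_sum_homDer,
      LinearMap.sum_apply, Finset.sum_filter]
    refine Finset.sum_congr rfl fun e he => ?_
    split_ifs with h
    · rw [← ih, h, show d + ((N + 1 : ℕ) : ℤ) * L - L = d + N * L by push_cast; ring]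
    · rw [proj_gradeBy_iterate_sum_homDer_eq_zero hE hx N, map_zero]
      push_cast; linarith [lt_of_le_of_ne (hE e he) h]

lemma iterate_sum_homDer_filter_eq_zero_of_mem_gradeBy (hE : ∀ e ∈ E, l e ≤ L)
    (hx : x ∈ gradeBy K l d) {N : ℕ} (hN : (⇑(∑ e ∈ E, homDer K (c e) e))^[N] x = 0) :
    (⇑(∑ e ∈ E.filter (fun e => l e = L), homDer K (c e) e))^[N] x = 0 := by
  have htop := proj_gradeBy_iterate_sum_homDer_top (c := c) hE
    (fun j hj => decompose_of_mem_ne _ hx hj.ne) N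
  rwa [hN, map_zero, GradedAlgebra.proj_apply, decompose_of_mem_same _ hx, eq_comm] at htop

end AddMonoidAlgebra

lemma InConeAlg.proj_gradeBy {K : Type*} [Field K] {M : Type*} [AddCommGroup M] {k : ℕ}
    {ρs : Fin k → (M →+ ℤ)} {x : AddMonoidAlgebra K M} (hx : InConeAlg ρs x)
    (l : M →+ ℤ) (d : ℤ) : InConeAlg ρs (GradedAlgebra.proj (gradeBy K l) d x) :=
  fun m hm => hx m (support_proj_gradeBy_subset l d x hm)

theorem stmt9_general {K : Type*} [Field K] {M : Type*} [AddCommGroup M] (k : ℕ)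
    (ρs : Fin k → (M →+ ℤ))
    (E : Finset M) (c : M → (M →+ ℤ))
    (hLND : ∀ x : AddMonoidAlgebra K M, InConeAlg ρs x →
        ∃ N : ℕ, (⇑(∑ e ∈ E, homDer K (c e) e))^[N] x = 0)
    (l : M →+ ℤ) :
    ∀ x : AddMonoidAlgebra K M, InConeAlg ρs x →
      ∃ N : ℕ,
        (⇑(∑ e ∈ E.filter (fun e => ∀ e' ∈ E, l e' ≤ l e), homDer K (c e) e))^[N] x = 0 := by
  obtain ⟨L, hE, hτ⟩ := E.exists_filter_forall_le_eq_filter_eq l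
  rw [hτ]
  intro x hx
  classical
  refine (Module.End.mem_maxGenEigenspace_zero_iff _ x).1 ?_
  rw [← sum_support_decompose (gradeBy K l) x]
  refine Submodule.sum_mem _ fun d _ => (Module.End.mem_maxGenEigenspace_zero_iff _ _).2 ?_
  obtain ⟨N, hN⟩ := hLND _ (hx.proj_gradeBy l d)
  exact ⟨N, iterate_sum_homDer_filter_eq_zero_of_mem_gradeBy hE (SetLike.coe_mem _) hN⟩

/-- let `∂ = Σ_{e ∈ E} ∂_e` (with `∂_e = ∂_{c(e),e}` homogeneous of degree
`e`) be a derivation of the semigroup algebra `A` of the cone which is locally nilpotent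
on `A`. Then for any face `τ` of the Newton polytope `N(∂) = conv(E)` — cut out as the
locus where an integral linear functional `l` attains its maximum on `E` — the truncation
`∂_τ = Σ_{e ∈ τ ∩ M} ∂_e` is again locally nilpotent on `A`. In particular, every vertex
component `∂_e` is locally nilpotent. -/
theorem stmt9 {K : Type*} [Field K] [CharZero K] {M : Type*} [AddCommGroup M] (k : ℕ)
    (ρs : Fin k → (M →+ ℤ))
    (E : Finset M) (c : M → (M →+ ℤ))
    (hpres : ∀ x : AddMonoidAlgebra K M, InConeAlg ρs x →
        InConeAlg ρs ((∑ e ∈ E, homDer K (c e) e) x))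
    (hLND : ∀ x : AddMonoidAlgebra K M, InConeAlg ρs x →
        ∃ N : ℕ, (⇑(∑ e ∈ E, homDer K (c e) e))^[N] x = 0)
    (l : M →+ ℤ) :
    ∀ x : AddMonoidAlgebra K M, InConeAlg ρs x →
      ∃ N : ℕ,
        (⇑(∑ e ∈ E.filter (fun e => ∀ e' ∈ E, l e' ≤ l e), homDer K (c e) e))^[N] x = 0 :=
  stmt9_general k ρs E c hLND l
end

section
/- Let g = α₁ g₁ ⋯ α_l g_l α_{l+1} be an automorphism of 𝔸^n where each g_i has Jacobian 1 and each α_j is affine, and suppose Jac(g) = 1. Then there exist h₁,…,h_l with Jac(h_i) = 1 and volume-preserving affine maps β₁,…,β_{l+1} ∈ SAff_n such that g = β₁ h₁ ⋯ β_l h_l β_{l+1}; explicitly one can take h_i = γ_i g_i γ_i⁻¹ and β_j = γ_{j−1} α_j γ_j⁻¹ for suitable scalar dilations γ_j. -/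
open MvPolynomial

/-- The Jacobian determinant of a polynomial automorphism of `𝔸ⁿ`. -/
noncomputable def jacAut {K : Type*} [CommRing K] {n : ℕ}
    (g : MvPolynomial (Fin n) K ≃ₐ[K] MvPolynomial (Fin n) K) : MvPolynomial (Fin n) K :=
  (Matrix.of fun i j : Fin n => MvPolynomial.pderiv j (g (MvPolynomial.X i))).det

/-- A polynomial automorphism is affine if each component has total degree at most `1`. -/
def IsAffineAut {K : Type*} [CommRing K] {n : ℕ}
    (g : MvPolynomial (Fin n) K ≃ₐ[K] MvPolynomial (Fin n) K) : Prop :=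
  ∀ i : Fin n, (g (MvPolynomial.X i)).totalDegree ≤ 1

/-- A scalar dilation `x ↦ c · x`. -/
def IsDilation {K : Type*} [CommRing K] {n : ℕ}
    (g : MvPolynomial (Fin n) K ≃ₐ[K] MvPolynomial (Fin n) K) : Prop :=
  ∃ c : K, c ≠ 0 ∧ ∀ i : Fin n, g (MvPolynomial.X i) = MvPolynomial.C c * MvPolynomial.X i

/-!
An automorphism has an invertible Jacobian, and over a reduced ring an invertible polynomial is a
constant, so by the chain rule `Jac` is a homomorphism to `Kˣ`. The dilation `x ↦ c x` has Jacobian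
`cⁿ`, and over an algebraically closed field every unit is an `n`-th power. With `cⱼ = Jac(αⱼ)`
the hypothesis says `∏ cⱼ = 1`, so there are dilations `γⱼ` with `γ₀ = γₗ₊₁ = 1` and
`Jac(γⱼ₊₁) = Jac(γⱼ) cⱼ`. Inserting `γⱼ⁻¹ γⱼ` between consecutive factors of the word leaves it
unchanged, keeps each `γⱼ αⱼ γⱼ₊₁⁻¹` affine and gives it Jacobian one.
-/

theorem pderiv_algHom_apply {K σ : Type*} [CommRing K] [Fintype σ]
    (φ : MvPolynomial σ K →ₐ[K] MvPolynomial σ K) (p : MvPolynomial σ K) (j : σ) :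
    pderiv j (φ p) = ∑ k, φ (pderiv k p) * pderiv j (φ (X k)) := by
  classical
  induction p using MvPolynomial.induction_on with
  | C a => simp
  | add p q hp hq => simp [hp, hq, add_mul, Finset.sum_add_distrib]
  | mul_X p i hp =>
    simp only [map_mul, pderiv_mul, hp, pderiv_X, Pi.single_apply, mul_ite, mul_one, mul_zero,
      map_add, apply_ite φ, map_zero, add_mul, ite_mul, zero_mul, Finset.sum_add_distrib,
      Finset.sum_ite_eq, Finset.mem_univ, if_true]
    rw [Finset.sum_mul]
    congr 1
    exact Finset.sum_congr rfl fun k _ => mul_right_comm _ _ _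

abbrev PolyAut (K : Type*) [CommRing K] (n : ℕ) :=
  MvPolynomial (Fin n) K ≃ₐ[K] MvPolynomial (Fin n) K

section Jacobian

variable {K : Type*} [CommRing K] {n : ℕ}

theorem jacAut_one : jacAut (1 : PolyAut K n) = 1 := by
  classical
  have : (Matrix.of fun i j : Fin n => pderiv j ((1 : PolyAut K n) (X i))) = 1 := by
    ext i j
    simp [Matrix.one_apply, pderiv_X, Pi.single_apply]
  rw [jacAut, this, Matrix.det_one]

theorem jacAut_mul (f g : PolyAut K n) : jacAut (f * g) = f (jacAut g) * jacAut f := by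
  classical
  have hchain : (Matrix.of fun i j : Fin n => pderiv j ((f * g) (X i))) =
      (f : MvPolynomial (Fin n) K →+* MvPolynomial (Fin n) K).mapMatrix
        (Matrix.of fun i k : Fin n => pderiv k (g (X i))) *
      Matrix.of fun k j : Fin n => pderiv j (f (X k)) := by
    refine Matrix.ext fun i j => ?_
    exact pderiv_algHom_apply f.toAlgHom (g (X i)) j
  rw [jacAut, hchain, Matrix.det_mul, jacAut, jacAut, ← RingHom.map_det]
  rfl

theorem isUnit_jacAut (f : PolyAut K n) : IsUnit (jacAut f) := by
  have h := jacAut_mul f f⁻¹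
  rw [mul_inv_cancel, jacAut_one] at h
  exact IsUnit.of_mul_eq_one_right _ h.symm

theorem jacAut_eq_C_coeff_zero [IsReduced K] (f : PolyAut K n) :
    jacAut f = C ((jacAut f).coeff 0) :=
  totalDegree_eq_zero_iff_eq_C.1 (isUnit_iff_totalDegree_of_isReduced.1 (isUnit_jacAut f)).2

theorem jacAut_mul_of_eq_C {f g : PolyAut K n} {a b : K} (hf : jacAut f = C a)
    (hg : jacAut g = C b) : jacAut (f * g) = C (a * b) := by
  rw [jacAut_mul, hf, hg, ← algebraMap_eq, AlgEquiv.commutes, algebraMap_eq, ← C_mul, mul_comm]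

noncomputable def jacUnit [IsReduced K] : PolyAut K n →* Kˣ where
  toFun f := (isUnit_iff_totalDegree_of_isReduced.1 (isUnit_jacAut f)).1.unit
  map_one' := by ext; simp [jacAut_one]
  map_mul' f g := by
    ext
    simp only [IsUnit.unit_spec, Units.val_mul]
    rw [jacAut_mul_of_eq_C (jacAut_eq_C_coeff_zero f) (jacAut_eq_C_coeff_zero g), coeff_zero_C]

theorem jacAut_eq_C_jacUnit [IsReduced K] (f : PolyAut K n) : jacAut f = C (jacUnit f : K) :=
  jacAut_eq_C_coeff_zero f

theorem jacAut_eq_one_iff [IsReduced K] {f : PolyAut K n} : jacAut f = 1 ↔ jacUnit f = 1 := by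
  rw [jacAut_eq_C_jacUnit, ← C_1, C_inj, Units.val_eq_one]

end Jacobian

section Dilation

variable {K : Type*} [CommRing K] {n : ℕ}

noncomputable def dilation : Kˣ →* PolyAut K n where
  toFun c := AlgEquiv.ofAlgHom (aeval fun i => C (c : K) * X i) (aeval fun i => C (↑c⁻¹ : K) * X i)
    (algHom_ext fun i => by simp [← mul_assoc, ← C_mul])
    (algHom_ext fun i => by simp [← mul_assoc, ← C_mul])
  map_one' := AlgEquiv.coe_toAlgHom_injective (algHom_ext fun i => by simp)
  map_mul' c d := AlgEquiv.coe_toAlgHom_injective (algHom_ext fun i => by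
    simp only [AlgEquiv.toAlgHom_apply, AlgEquiv.mul_apply, AlgEquiv.ofAlgHom_apply, aeval_X,
      map_mul, algHom_C, algebraMap_eq, Units.val_mul]
    ring)

theorem dilation_apply (c : Kˣ) (p : MvPolynomial (Fin n) K) :
    dilation c p = aeval (fun i => C (c : K) * X i) p := rfl

@[simp]
theorem dilation_apply_X (c : Kˣ) (i : Fin n) : dilation c (X i) = C (c : K) * X i := by
  simp [dilation_apply]

theorem isDilation_dilation [Nontrivial K] (c : Kˣ) : IsDilation (dilation c : PolyAut K n) :=
  ⟨c, c.ne_zero, dilation_apply_X c⟩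

theorem jacAut_dilation (c : Kˣ) : jacAut (dilation c : PolyAut K n) = C ((c : K) ^ n) := by
  classical
  have : (Matrix.of fun i j : Fin n => pderiv j (dilation c (X i))) =
      Matrix.diagonal fun _ => C (c : K) := by
    refine Matrix.ext fun i j => ?_
    simp [pderiv_X, Pi.single_apply, Matrix.diagonal_apply]
  rw [jacAut, this, Matrix.det_diagonal, Finset.prod_const, Finset.card_univ, Fintype.card_fin,
    C_pow]

theorem jacUnit_dilation [IsReduced K] (c : Kˣ) : jacUnit (dilation c : PolyAut K n) = c ^ n := by
  ext
  apply C_injective (Fin n) K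
  rw [← jacAut_eq_C_jacUnit, jacAut_dilation, Units.val_pow_eq_pow_val]

theorem totalDegree_dilation_le (c : Kˣ) (p : MvPolynomial (Fin n) K) :
    (dilation c p).totalDegree ≤ p.totalDegree := by
  have hlin : ∀ i : Fin n, (C (c : K) * X i).IsHomogeneous 1 := fun i =>
    by simpa using (isHomogeneous_C _ _).mul (isHomogeneous_X K i)
  rw [dilation_apply]
  conv_lhs => rw [← sum_homogeneousComponent p]
  rw [map_sum]
  refine totalDegree_finsetSum_le fun k hk => ?_
  refine (((homogeneousComponent_isHomogeneous k p).aeval _ hlin).totalDegree_le).trans ?_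
  simpa [Nat.lt_succ_iff] using hk

theorem IsAffineAut.dilation_mul {f : PolyAut K n} (hf : IsAffineAut f) (c : Kˣ) :
    IsAffineAut (dilation c * f) := fun i =>
  (totalDegree_dilation_le c _).trans (hf i)

theorem IsAffineAut.mul_dilation {f : PolyAut K n} (hf : IsAffineAut f) (c : Kˣ) :
    IsAffineAut (f * dilation c) := by
  intro i
  rw [AlgEquiv.mul_apply, dilation_apply_X, map_mul, ← algebraMap_eq, AlgEquiv.commutes,
    algebraMap_eq, ← smul_eq_C_mul]
  exact (totalDegree_smul_le _ _).trans (hf i)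

end Dilation

theorem exists_dilation_jacUnit_eq {K : Type*} [Field K] [IsAlgClosed K] {n : ℕ} (f : PolyAut K n) :
    ∃ c : Kˣ, jacUnit (dilation c : PolyAut K n) = jacUnit f := by
  simp_rw [jacUnit_dilation]
  rcases Nat.eq_zero_or_pos n with rfl | hn
  · refine ⟨1, ?_⟩
    rw [pow_zero, eq_comm, ← jacAut_eq_one_iff, jacAut, Matrix.det_fin_zero]
  · obtain ⟨z, hz⟩ := IsAlgClosed.exists_pow_nat_eq (jacUnit f : K) hn
    have hz0 : z ≠ 0 := by rintro rfl; exact (jacUnit f).ne_zero (by rw [← hz, zero_pow hn.ne'])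
    exact ⟨Units.mk0 z hz0, Units.ext (by simpa using hz)⟩

theorem MonoidHom.exists_path_of_prod_eq_one {G H : Type*} [CommGroup G] [CommGroup H]
    (ψ : G →* H) {m : ℕ} (c : Fin (m + 1) → H) (hc : ∀ j, c j ∈ ψ.range) (hprod : ∏ j, c j = 1) :
    ∃ d : Fin (m + 2) → G, d 0 = 1 ∧ d (Fin.last (m + 1)) = 1 ∧
      ∀ j, ψ (d j.succ) = ψ (d j.castSucc) * c j := by
  classical
  choose e he using hc
  -- correcting the last lift by `(∏ e)⁻¹ ∈ ker ψ` makes the lifts multiply to `1`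
  set e' := e * Pi.mulSingle (Fin.last m) (∏ j, e j)⁻¹
  have hker : ψ (∏ j, e j)⁻¹ = 1 := by simp [map_prod, he, hprod]
  refine ⟨Fin.partialProd e', Fin.partialProd_zero e', ?_, fun j => ?_⟩
  · rw [Fin.partialProd, Fin.val_last, List.take_of_length_le (by simp), List.prod_ofFn]
    simp [e', Finset.prod_mul_distrib]
  · rw [Fin.partialProd_succ, map_mul]
    congr 1
    by_cases hj : j = Fin.last m
    · subst hj; simp [e', he, hker]
    · simp [e', he, hj]

theorem List.prod_ofFn_telescope {G : Type*} [Group G] {l : ℕ} (a : Fin l → G)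
    (γ : Fin (l + 1) → G) :
    (List.ofFn fun i => γ i.castSucc * a i * (γ i.succ)⁻¹).prod =
      γ 0 * (List.ofFn a).prod * (γ (Fin.last l))⁻¹ := by
  induction l with
  | zero => simp
  | succ l ih =>
    have := ih (fun i => a i.succ) (fun j => γ j.succ)
    simp only [Fin.succ_castSucc, Fin.succ_last] at this
    simp only [List.ofFn_succ, List.prod_cons, Fin.castSucc_zero, this]
    group

theorem List.prod_ofFn_alternating_conj {G : Type*} [Group G] {l : ℕ} (a : Fin l → G)
    (b : Fin (l + 1) → G) (γ : Fin (l + 2) → G) :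
    (List.ofFn fun i : Fin l => γ i.castSucc.castSucc * b i.castSucc * (γ i.castSucc.succ)⁻¹ *
        (γ i.succ.castSucc * a i * (γ i.succ.castSucc)⁻¹)).prod *
        (γ (Fin.last l).castSucc * b (Fin.last l) * (γ (Fin.last (l + 1)))⁻¹) =
      γ 0 * ((List.ofFn fun i => b i.castSucc * a i).prod * b (Fin.last l)) *
        (γ (Fin.last (l + 1)))⁻¹ := by
  have := List.prod_ofFn_telescope (fun i => b i.castSucc * a i) (fun j => γ j.castSucc)
  simp only [mul_assoc] at this
  simp only [Fin.succ_castSucc, mul_assoc, inv_mul_cancel_left, this, Fin.castSucc_zero]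

theorem stmt12_general {K : Type*} [Field K] [IsAlgClosed K] (n l : ℕ)
    (gs : Fin l → (MvPolynomial (Fin n) K ≃ₐ[K] MvPolynomial (Fin n) K))
    (α : Fin (l + 1) → (MvPolynomial (Fin n) K ≃ₐ[K] MvPolynomial (Fin n) K))
    (hg : ∀ i, jacAut (gs i) = 1)
    (hα : ∀ j, IsAffineAut (α j))
    (g : MvPolynomial (Fin n) K ≃ₐ[K] MvPolynomial (Fin n) K)
    (hdecomp : g = (List.ofFn fun i : Fin l => α i.castSucc * gs i).prod * α (Fin.last l))
    (hJac : jacAut g = 1) :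
    ∃ (h : Fin l → (MvPolynomial (Fin n) K ≃ₐ[K] MvPolynomial (Fin n) K))
      (β : Fin (l + 1) → (MvPolynomial (Fin n) K ≃ₐ[K] MvPolynomial (Fin n) K)),
      (∀ i, jacAut (h i) = 1) ∧
      (∀ j, IsAffineAut (β j) ∧ jacAut (β j) = 1) ∧
      g = (List.ofFn fun i : Fin l => β i.castSucc * h i).prod * β (Fin.last l) ∧
      ∃ γ : Fin (l + 2) → (MvPolynomial (Fin n) K ≃ₐ[K] MvPolynomial (Fin n) K),
        γ 0 = 1 ∧ γ (Fin.last (l + 1)) = 1 ∧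
        (∀ j : Fin (l + 2), γ j = 1 ∨ IsDilation (γ j)) ∧
        (∀ i : Fin l, h i = γ i.succ.castSucc * gs i * (γ i.succ.castSucc)⁻¹) ∧
        (∀ j : Fin (l + 1), β j = γ j.castSucc * α j * (γ j.succ)⁻¹) := by
  have hgs : ∀ i, jacUnit (gs i) = 1 := fun i => jacAut_eq_one_iff.1 (hg i)
  have hprod : ∏ j, jacUnit (α j) = 1 := by
    rw [← jacAut_eq_one_iff.1 hJac, hdecomp]
    simp [map_list_prod, List.map_ofFn, Function.comp_def, hgs, List.prod_ofFn,
      Fin.prod_univ_castSucc]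
  obtain ⟨d, hd0, hdlast, hstep⟩ := (jacUnit.comp dilation).exists_path_of_prod_eq_one _
    (fun j => exists_dilation_jacUnit_eq (α j)) hprod
  set γ : Fin (l + 2) → PolyAut K n := fun j => dilation (d j)
  refine ⟨fun i => γ i.succ.castSucc * gs i * (γ i.succ.castSucc)⁻¹,
    fun j => γ j.castSucc * α j * (γ j.succ)⁻¹, fun i => ?_, fun j => ⟨?_, ?_⟩, ?_,
    γ, by simp [γ, hd0], by simp [γ, hdlast], fun j => Or.inr (isDilation_dilation _),
    fun i => rfl, fun j => rfl⟩
  · rw [jacAut_eq_one_iff, map_mul, map_mul, map_inv, mul_inv_cancel_comm, hgs]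
  · simpa only [map_inv] using ((hα j).dilation_mul _).mul_dilation (d j.succ)⁻¹
  · rw [jacAut_eq_one_iff, map_mul, map_mul, map_inv, mul_inv_eq_one]
    exact (hstep j).symm
  · rw [hdecomp]
    refine Eq.symm ((List.prod_ofFn_alternating_conj gs α γ).trans ?_)
    simp [γ, hd0, hdlast]

/-- if `g = α₁ g₁ ⋯ α_l g_l α_{l+1}` with `Jac(g_i) = 1`, `α_j` affine and
`Jac(g) = 1`, then `g = β₁ h₁ ⋯ β_l h_l β_{l+1}` with `Jac(h_i) = 1` and
`β_j ∈ SAff_n`; explicitly `h_i = γ_i g_i γ_i⁻¹`, `β_j = γ_{j−1} α_j γ_j⁻¹` for suitable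
scalar dilations `γ_j` with `γ_0 = γ_{l+1} = id`. -/
theorem stmt12 {K : Type*} [Field K] [CharZero K] [IsAlgClosed K] (n l : ℕ)
    (gs : Fin l → (MvPolynomial (Fin n) K ≃ₐ[K] MvPolynomial (Fin n) K))
    (α : Fin (l + 1) → (MvPolynomial (Fin n) K ≃ₐ[K] MvPolynomial (Fin n) K))
    (hg : ∀ i, jacAut (gs i) = 1)
    (hα : ∀ j, IsAffineAut (α j))
    (g : MvPolynomial (Fin n) K ≃ₐ[K] MvPolynomial (Fin n) K)
    (hdecomp : g = (List.ofFn fun i : Fin l => α i.castSucc * gs i).prod * α (Fin.last l))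
    (hJac : jacAut g = 1) :
    ∃ (h : Fin l → (MvPolynomial (Fin n) K ≃ₐ[K] MvPolynomial (Fin n) K))
      (β : Fin (l + 1) → (MvPolynomial (Fin n) K ≃ₐ[K] MvPolynomial (Fin n) K)),
      (∀ i, jacAut (h i) = 1) ∧
      (∀ j, IsAffineAut (β j) ∧ jacAut (β j) = 1) ∧
      g = (List.ofFn fun i : Fin l => β i.castSucc * h i).prod * β (Fin.last l) ∧
      ∃ γ : Fin (l + 2) → (MvPolynomial (Fin n) K ≃ₐ[K] MvPolynomial (Fin n) K),
        γ 0 = 1 ∧ γ (Fin.last (l + 1)) = 1 ∧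
        (∀ j : Fin (l + 2), γ j = 1 ∨ IsDilation (γ j)) ∧
        (∀ i : Fin l, h i = γ i.succ.castSucc * gs i * (γ i.succ.castSucc)⁻¹) ∧
        (∀ j : Fin (l + 1), β j = γ j.castSucc * α j * (γ j.succ)⁻¹) :=
  stmt12_general n l gs α hg hα g hdecomp hJac
end

section
/- Let a, b ≥ 0 be integers with ab > 2, and let G ⊆ Aut(𝔸²) be the group generated by the automorphisms (x,y) ↦ (x + t y^a, y) and (x,y) ↦ (x, y + s x^b) for all t, s ∈ K. Fix a primitive (ab−1)-th root of unity ω. Then the set S = {((x,y),(ωx, ω^b y)) : (x,y) ∈ 𝔸²} ⊆ 𝔸² × 𝔸² is invariant under the diagonal action of G; consequently G does not act 2-transitively on any subset of 𝔸² containing two pairs not related by this correspondence. -/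
/-- The triangular automorphism `(x, y) ↦ (x + t yᵃ, y)` of `𝔸²`. -/
def shearX {K : Type*} [Field K] (a : ℕ) (t : K) : Equiv.Perm (K × K) where
  toFun p := (p.1 + t * p.2 ^ a, p.2)
  invFun p := (p.1 - t * p.2 ^ a, p.2)
  left_inv p := by simp
  right_inv p := by simp

/-- The triangular automorphism `(x, y) ↦ (x, y + s xᵇ)` of `𝔸²`. -/
def shearY {K : Type*} [Field K] (b : ℕ) (s : K) : Equiv.Perm (K × K) where
  toFun p := (p.1, p.2 + s * p.1 ^ b)
  invFun p := (p.1, p.2 - s * p.1 ^ b)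
  left_inv p := by simp
  right_inv p := by simp

/-!
The correspondence `S` is the graph of the diagonal map `(x, y) ↦ (ω x, ωᵇ y)`, so it is
invariant under every permutation commuting with that map. Such permutations form a subgroup,
and both shears commute with `(x, y) ↦ (c x, d y)` as soon as `dᵃ = c` resp. `cᵇ = d`; for
`c = ω`, `d = ωᵇ` the first condition reads `ω^(ab) = ω`, which is `ω^(ab-1) = 1` as `ab > 0`.
-/

namespace Equiv.Perm

variable {α : Type*}

def commuteSubgroup (f : α → α) : Subgroup (Equiv.Perm α) where
  carrier := {g | Function.Commute g f}
  one_mem' := Function.Commute.id_left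
  mul_mem' hg hh := Function.Commute.comp_left hg hh
  inv_mem' {g} hg := Function.Semiconj.inverse_left hg g.left_inv g.right_inv

end Equiv.Perm

section Shears

variable {K : Type*} [Field K]

def diagScale (c d : K) (P : K × K) : K × K := (c * P.1, d * P.2)

theorem shearX_commute_diagScale (a : ℕ) (t : K) {c d : K} (h : d ^ a = c) :
    Function.Commute (shearX a t) (diagScale c d) := fun P => by
  simp only [shearX, diagScale, Equiv.coe_fn_mk, Prod.mk.injEq, and_true]
  rw [mul_pow, h]
  ring

theorem shearY_commute_diagScale (b : ℕ) (s : K) {c d : K} (h : c ^ b = d) :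
    Function.Commute (shearY b s) (diagScale c d) := fun P => by
  simp only [shearY, diagScale, Equiv.coe_fn_mk, Prod.mk.injEq, true_and]
  rw [mul_pow, h]
  ring

theorem closure_shears_le_commuteSubgroup (a b : ℕ) {c d : K} (hX : d ^ a = c)
    (hY : c ^ b = d) :
    Subgroup.closure (Set.range (shearX (K := K) a) ∪ Set.range (shearY (K := K) b)) ≤
      Equiv.Perm.commuteSubgroup (diagScale c d) := by
  rw [Subgroup.closure_le]
  rintro _ (⟨t, rfl⟩ | ⟨s, rfl⟩)
  · exact shearX_commute_diagScale a t hX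
  · exact shearY_commute_diagScale b s hY

end Shears

theorem stmt13_general {K : Type*} [Field K]
    (a b : ℕ) (hab : 2 < a * b)
    (ω : K) (hω : ω ^ (a * b - 1) = 1) :
    (∀ g ∈ Subgroup.closure
        (Set.range (shearX (K := K) a) ∪ Set.range (shearY (K := K) b)),
      ∀ P Q : K × K, Q = (ω * P.1, ω ^ b * P.2) → g Q = (ω * (g P).1, ω ^ b * (g P).2))
    ∧ ∀ (P Q P' Q' : K × K), Q = (ω * P.1, ω ^ b * P.2) →
        Q' ≠ (ω * P'.1, ω ^ b * P'.2) →
        ¬ ∃ g ∈ Subgroup.closure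
            (Set.range (shearX (K := K) a) ∪ Set.range (shearY (K := K) b)),
          g P = P' ∧ g Q = Q' := by
  have hpow : (ω ^ b) ^ a = ω := by
    rw [← pow_mul, mul_comm b a, show a * b = (a * b - 1) + 1 by omega, pow_succ, hω, one_mul]
  have hcomm : ∀ g ∈ Subgroup.closure
      (Set.range (shearX (K := K) a) ∪ Set.range (shearY (K := K) b)),
      Function.Commute g (diagScale ω (ω ^ b)) := fun g hg =>
    closure_shears_le_commuteSubgroup a b hpow rfl hg
  refine ⟨fun g hg P Q hQ => hQ ▸ hcomm g hg P, ?_⟩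
  rintro P Q P' Q' rfl hne ⟨g, hg, rfl, rfl⟩
  exact hne (hcomm g hg P)

/-- for integers `a, b ≥ 0` with `ab > 2` and `ω` a primitive
`(ab−1)`-th root of unity, the set `S = {(P, Q) : Q = (ω x(P), ω^b y(P))}` is invariant
under the diagonal action of the group `G` generated by the two root subgroups
`(x,y) ↦ (x + t yᵃ, y)` and `(x,y) ↦ (x, y + s xᵇ)`; consequently `G` cannot send a pair
in `S` to a pair outside `S`, so it is not 2-transitive. -/
theorem stmt13 {K : Type*} [Field K] [CharZero K] [IsAlgClosed K]
    (a b : ℕ) (hab : 2 < a * b)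
    (ω : K) (hω : ω ^ (a * b - 1) = 1)
    (hωprim : ∀ j : ℕ, 0 < j → j < a * b - 1 → ω ^ j ≠ 1) :
    (∀ g ∈ Subgroup.closure
        (Set.range (shearX (K := K) a) ∪ Set.range (shearY (K := K) b)),
      ∀ P Q : K × K, Q = (ω * P.1, ω ^ b * P.2) → g Q = (ω * (g P).1, ω ^ b * (g P).2))
    ∧ ∀ (P Q P' Q' : K × K), Q = (ω * P.1, ω ^ b * P.2) →
        Q' ≠ (ω * P'.1, ω ^ b * P'.2) →
        ¬ ∃ g ∈ Subgroup.closure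
            (Set.range (shearX (K := K) a) ∪ Set.range (shearY (K := K) b)),
          g P = P' ∧ g Q = Q' :=
  stmt13_general a b hab ω hω
end

section
/- Let G be a subgroup of the automorphism group of an affine variety X acting on X, and suppose a nonempty closed subset Y ⊆ X is G-invariant. If the closure of G (in the ind-group topology on Aut(X)) acts on X, then Y is invariant under this closure; consequently, if G acts with an open orbit O_G, then the open orbit of the closure of G coincides with O_G. -/
/-! The set of `g` with `g • y ∈ Y` is closed whenever `Y` is, since orbit maps are continuous;
so `G`-invariance of a closed `Y` passes to the closure of `G`. For an open orbit `O` of `G`,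
apply this to the closed `G`-invariant set `Oᶜ`: an element `g` of the closure with `g • x ∉ O`
would give `x = g⁻¹ • g • x ∉ O`. -/

open MulAction

theorem smul_mem_of_mem_closure {A X : Type*} [TopologicalSpace A] [TopologicalSpace X]
    [SMul A X] (hcont : ∀ x : X, Continuous fun g : A => g • x)
    {S : Set A} {Y : Set X} (hY : IsClosed Y) (hSY : ∀ g ∈ S, ∀ y ∈ Y, g • y ∈ Y)
    {g : A} (hg : g ∈ closure S) {y : X} (hy : y ∈ Y) : g • y ∈ Y :=
  closure_minimal (fun a ha => hSY a ha y hy) (hY.preimage (hcont y)) hg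

section Orbit

variable {A X : Type*} [Group A] [MulAction A X]

theorem MulAction.orbit_subset_orbit_of_le {H K : Subgroup A} (hHK : H ≤ K) (x : X) :
    orbit H x ⊆ orbit K x := by
  rintro _ ⟨g, rfl⟩
  exact ⟨⟨g, hHK g.2⟩, rfl⟩

theorem MulAction.smul_mem_orbit_subgroup_iff {H : Subgroup A} {a : A} (ha : a ∈ H) (x y : X) :
    a • y ∈ orbit H x ↔ y ∈ orbit H x := by
  rw [← orbit_eq_iff, ← orbit_eq_iff, ← orbit_smul (⟨a, ha⟩ : H) y]
  rfl

end Orbit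

theorem MulAction.orbit_topologicalClosure_eq_of_isOpen {A X : Type*} [Group A]
    [TopologicalSpace A] [IsTopologicalGroup A] [TopologicalSpace X] [MulAction A X]
    (hcont : ∀ x : X, Continuous fun g : A => g • x) {G : Subgroup A} {x : X}
    (hO : IsOpen (orbit G x)) : orbit G.topologicalClosure x = orbit G x := by
  refine subset_antisymm ?_ (orbit_subset_orbit_of_le G.le_topologicalClosure x)
  rintro _ ⟨⟨g, hg⟩, rfl⟩
  change g • x ∈ orbit G x
  by_contra hgx
  have hcompl : ∀ a ∈ (G : Set A), ∀ y ∈ (orbit G x)ᶜ, a • y ∈ (orbit G x)ᶜ :=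
    fun a ha y hy => (smul_mem_orbit_subgroup_iff ha x y).not.mpr hy
  have hg' : g⁻¹ ∈ closure (G : Set A) := G.topologicalClosure.inv_mem hg
  have hx := smul_mem_of_mem_closure hcont hO.isClosed_compl hcompl hg' hgx
  rw [inv_smul_smul] at hx
  exact hx (mem_orbit_self x)

/-- let a group `A` with a topology act on a space `X` so that for each
`x ∈ X` the orbit map `g ↦ g • x` is continuous, and let `G ≤ A` be a subgroup. Then any
nonempty closed `G`-invariant subset `Y ⊆ X` is invariant under the (topological) closure
of `G`; consequently, if `G` acts with an open orbit `O_G`, the open orbit of the closure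
of `G` coincides with `O_G`. -/
theorem stmt18 {A X : Type*} [Group A] [TopologicalSpace A] [IsTopologicalGroup A]
    [TopologicalSpace X] [MulAction A X]
    (hcont : ∀ x : X, Continuous fun g : A => g • x)
    (G : Subgroup A) :
    (∀ Y : Set X, Y.Nonempty → IsClosed Y → (∀ g ∈ G, ∀ y ∈ Y, g • y ∈ Y) →
      ∀ g ∈ G.topologicalClosure, ∀ y ∈ Y, g • y ∈ Y)
    ∧ ∀ x : X, IsOpen (MulAction.orbit G x) →
        MulAction.orbit G.topologicalClosure x = MulAction.orbit G x :=
  ⟨fun _ _ hY hGY _ hg _ hy => smul_mem_of_mem_closure hcont hY hGY hg hy,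
    fun _ hO => orbit_topologicalClosure_eq_of_isOpen hcont hO⟩
end
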